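/- arXiv:2506.18033 — 2 statements merged into one kernel-verified Lean document; each statement's English description precedes it below -/
import Mathlib

section
/- Let M = (m_i^a) be an r×N integer matrix satisfying Σ_{i=1}^N m_i^a > 0 for all a = 1,…,r. Then for every s ∈ ℂ^r and every z ∈ ℂ, the multiple series Σ_{d ∈ ℕ^r} z^{Σ_a Σ_i m_i^a d_a} / ∏_{i=1}^N Γ(1 + Σ_a m_i^a (d_a + s_a)) converges absolutely (terms where the Gamma argument is a nonpositive integer being set to zero). -/
/-!
Write the `i`-th Gamma argument as `αᵢ + kᵢ` with `αᵢ = 1 + ∑ₐ mᵢᵃ sₐ` and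
`kᵢ = ∑ₐ mᵢᵃ dₐ ∈ ℤ`. Up to a factor `A · B^|k|`, `|1/Γ(α + k)|` is at most `k⁻! / k⁺!`: this
follows from `1/Γ(w) = w / Γ(w + 1)`, run upwards from a base point with `re ≥ 1` (where
`|w + j| ≥ j + 1`) and downwards, and moving the base point by one only costs another
exponential factor. Positivity gives `∑ᵢ kᵢ ≥ n := ∑ₐ dₐ`, and the multinomial bound then turns
`∏ᵢ kᵢ⁻! / kᵢ⁺!` into `N^(∑ᵢ kᵢ⁺) / n!`. Since `∑ᵢ |kᵢ| = O(n)`, the terms are `O(Rⁿ / n!)`, and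
`Rⁿ / n! ≤ ∏ₐ R^{dₐ} / dₐ!` is summable over `ℕʳ`.
-/

open Finset Complex
open scoped Nat

namespace Complex

/-- Mathlib's `Gamma` vanishes at the poles `0, -1, -2, …`, so this holds for every `w`. -/
lemma inv_Gamma_eq_mul_inv_Gamma_add_one (w : ℂ) : (Gamma w)⁻¹ = w * (Gamma (w + 1))⁻¹ := by
  rcases eq_or_ne w 0 with rfl | hw
  · simp [Gamma_zero]
  · rw [Gamma_add_one w hw, mul_inv, ← mul_assoc, mul_inv_cancel₀ hw, one_mul]

lemma norm_inv_Gamma_add_nat_mul_factorial_le {w : ℂ} (hw : 1 ≤ w.re) (m : ℕ) :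
    ‖(Gamma (w + m))⁻¹‖ * m ! ≤ ‖(Gamma w)⁻¹‖ := by
  induction m with
  | zero => simp
  | succ m ih =>
    have hstep : ((m : ℝ) + 1) * ‖(Gamma (w + (m + 1 : ℕ)))⁻¹‖ ≤ ‖(Gamma (w + m))⁻¹‖ := by
      rw [inv_Gamma_eq_mul_inv_Gamma_add_one (w + m), norm_mul, Nat.cast_succ, ← add_assoc]
      gcongr
      calc (m : ℝ) + 1 ≤ (w + m).re := by rw [add_re, natCast_re]; linarith
        _ ≤ ‖w + m‖ := re_le_norm _
    calc ‖(Gamma (w + (m + 1 : ℕ)))⁻¹‖ * (m + 1)!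
        = ((m : ℝ) + 1) * ‖(Gamma (w + (m + 1 : ℕ)))⁻¹‖ * m ! := by
          push_cast [Nat.factorial_succ]; ring
      _ ≤ ‖(Gamma (w + m))⁻¹‖ * m ! := by gcongr
      _ ≤ ‖(Gamma w)⁻¹‖ := ih

lemma norm_inv_Gamma_sub_nat_le (w : ℂ) (m : ℕ) :
    ‖(Gamma (w - m))⁻¹‖ ≤ (1 + ‖w‖) ^ m * m ! * ‖(Gamma w)⁻¹‖ := by
  induction m with
  | zero => simp
  | succ m ih =>
    have hfactor : ‖w - (m + 1 : ℕ)‖ ≤ (1 + ‖w‖) * (m + 1 : ℕ) := by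
      calc ‖w - (m + 1 : ℕ)‖ ≤ ‖w‖ + ‖((m + 1 : ℕ) : ℂ)‖ := norm_sub_le _ _
        _ = ‖w‖ + (m + 1 : ℕ) := by rw [norm_natCast]
        _ ≤ (1 + ‖w‖) * (m + 1 : ℕ) := by
          push_cast; nlinarith [norm_nonneg w, (m.cast_nonneg : (0 : ℝ) ≤ m)]
    have hrec : w - m = w - (m + 1 : ℕ) + 1 := by push_cast; ring
    calc ‖(Gamma (w - (m + 1 : ℕ)))⁻¹‖
        = ‖w - (m + 1 : ℕ)‖ * ‖(Gamma (w - m))⁻¹‖ := by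
          rw [hrec, inv_Gamma_eq_mul_inv_Gamma_add_one, norm_mul]
      _ ≤ (1 + ‖w‖) * (m + 1 : ℕ) * ((1 + ‖w‖) ^ m * m ! * ‖(Gamma w)⁻¹‖) := by gcongr
      _ = (1 + ‖w‖) ^ (m + 1) * (m + 1)! * ‖(Gamma w)⁻¹‖ := by
          push_cast [Nat.factorial_succ]; ring

end Complex

noncomputable def factorialRatio (k : ℤ) : ℝ := ((-k).toNat ! : ℝ) / (k.toNat ! : ℝ)

@[simp] lemma factorialRatio_zero : factorialRatio 0 = 1 := by
  simp [factorialRatio]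

@[simp] lemma factorialRatio_natCast (m : ℕ) : factorialRatio m = (m ! : ℝ)⁻¹ := by
  simp [factorialRatio]

@[simp] lemma factorialRatio_neg_natCast (m : ℕ) : factorialRatio (-m) = m ! := by
  simp [factorialRatio]

lemma factorialRatio_nonneg (k : ℤ) : 0 ≤ factorialRatio k := by
  unfold factorialRatio; positivity

lemma factorialRatio_sub_one_le (k : ℤ) :
    factorialRatio (k - 1) ≤ (k.natAbs + 1) * factorialRatio k := by
  obtain ⟨m, rfl | rfl⟩ := Int.eq_nat_or_neg k
  · rcases m with _ | m
    · have h : ((0 : ℕ) : ℤ) - 1 = -((1 : ℕ) : ℤ) := by norm_num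
      rw [h, factorialRatio_neg_natCast]
      simp
    · have h : ((m + 1 : ℕ) : ℤ) - 1 = m := by push_cast; ring
      rw [h, factorialRatio_natCast, factorialRatio_natCast, Int.natAbs_natCast,
        Nat.factorial_succ]
      push_cast
      field_simp
      linarith
  · have h : -(m : ℤ) - 1 = -((m + 1 : ℕ) : ℤ) := by push_cast; ring
    rw [h, factorialRatio_neg_natCast, factorialRatio_neg_natCast, Int.natAbs_neg,
      Int.natAbs_natCast, Nat.factorial_succ]
    push_cast; rfl

def InvGammaShiftBound (w : ℂ) : Prop :=
  ∃ A B : ℝ, 0 ≤ A ∧ 1 ≤ B ∧ ∀ k : ℤ, ‖(Gamma (w + k))⁻¹‖ ≤ A * B ^ k.natAbs * factorialRatio k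

lemma invGammaShiftBound_of_one_le_re {w : ℂ} (hw : 1 ≤ w.re) : InvGammaShiftBound w := by
  refine ⟨‖(Gamma w)⁻¹‖, 1 + ‖w‖, norm_nonneg _, by simp, fun k => ?_⟩
  obtain ⟨m, rfl | rfl⟩ := Int.eq_nat_or_neg k
  · have h := norm_inv_Gamma_add_nat_mul_factorial_le hw m
    rw [Int.natAbs_natCast, factorialRatio_natCast, Int.cast_natCast,
      ← div_eq_mul_inv, le_div_iff₀ (by positivity)]
    calc ‖(Gamma (w + m))⁻¹‖ * m ! ≤ ‖(Gamma w)⁻¹‖ := h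
      _ ≤ ‖(Gamma w)⁻¹‖ * (1 + ‖w‖) ^ m := le_mul_of_one_le_right (norm_nonneg _)
          (one_le_pow₀ (by simp))
  · rw [Int.natAbs_neg, Int.natAbs_natCast, factorialRatio_neg_natCast, Int.cast_neg,
      Int.cast_natCast, ← sub_eq_add_neg]
    linarith [norm_inv_Gamma_sub_nat_le w m]

lemma InvGammaShiftBound.of_add_one {w : ℂ} (h : InvGammaShiftBound (w + 1)) :
    InvGammaShiftBound w := by
  obtain ⟨A, B, hA, hB, hbound⟩ := h
  refine ⟨A * B, 2 * B, by positivity, by linarith, fun k => ?_⟩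
  have hk : ((k.natAbs + 1 : ℕ) : ℝ) ≤ 2 ^ k.natAbs := by exact_mod_cast Nat.lt_two_pow_self
  calc ‖(Gamma (w + k))⁻¹‖ = ‖(Gamma (w + 1 + (k - 1 : ℤ)))⁻¹‖ := by push_cast; ring_nf
    _ ≤ A * B ^ (k - 1).natAbs * factorialRatio (k - 1) := hbound (k - 1)
    _ ≤ A * B ^ (k.natAbs + 1) * ((k.natAbs + 1 : ℕ) * factorialRatio k) := by
        have hpow : B ^ (k - 1).natAbs ≤ B ^ (k.natAbs + 1) := pow_le_pow_right₀ hB (by omega)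
        have hratio := factorialRatio_sub_one_le k
        push_cast
        gcongr
        exact factorialRatio_nonneg _
    _ ≤ A * B ^ (k.natAbs + 1) * (2 ^ k.natAbs * factorialRatio k) := by
        gcongr; exact factorialRatio_nonneg k
    _ = A * B * (2 * B) ^ k.natAbs * factorialRatio k := by ring

lemma invGammaShiftBound (w : ℂ) : InvGammaShiftBound w := by
  obtain ⟨L, hL⟩ := exists_nat_ge (1 - w.re)
  induction L generalizing w with
  | zero => exact invGammaShiftBound_of_one_le_re (by push_cast at hL; linarith)
  | succ L ih => exact (ih (w + 1) (by rw [add_re, one_re]; push_cast at hL; linarith)).of_add_one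

lemma Nat.multinomial_univ_le_card_pow {ι : Type*} [Fintype ι] (f : ι → ℕ) :
    Nat.multinomial univ f ≤ Fintype.card ι ^ ∑ i, f i := by
  classical
  have h := sum_pow_eq_sum_piAntidiag (univ : Finset ι) (fun _ => (1 : ℕ)) (∑ i, f i)
  simp only [sum_const, smul_eq_mul, mul_one, one_pow, prod_const_one, Nat.cast_id] at h
  rw [← Finset.card_univ, h]
  exact single_le_sum (fun _ _ => Nat.zero_le _) (mem_piAntidiag.2 ⟨rfl, fun i _ => mem_univ i⟩)

lemma factorial_mul_prod_factorialRatio_le {ι : Type*} [Fintype ι] (k : ι → ℤ) {n : ℕ}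
    (hn : (n : ℤ) ≤ ∑ i, k i) :
    n ! * ∏ i, factorialRatio (k i) ≤ (Fintype.card ι : ℝ) ^ ∑ i, (k i).toNat := by
  set p := ∑ i, (k i).toNat
  set q := ∑ i, (-k i).toNat
  have hpq : n + q ≤ p := by
    have h : ((p : ℕ) : ℤ) - q = ∑ i, k i := by
      simp only [p, q, Nat.cast_sum, ← sum_sub_distrib, Int.toNat_sub_toNat_neg]
    omega
  have hnat : n ! * ∏ i, (-k i).toNat ! ≤ Fintype.card ι ^ p * ∏ i, (k i).toNat ! :=
    calc n ! * ∏ i, (-k i).toNat ! ≤ n ! * q ! :=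
          Nat.mul_le_mul_left _ (Nat.le_of_dvd (Nat.factorial_pos _)
            (Nat.prod_factorial_dvd_factorial_sum _ _))
      _ ≤ (n + q)! := Nat.le_of_dvd (Nat.factorial_pos _)
          (Nat.factorial_mul_factorial_dvd_factorial_add _ _)
      _ ≤ p ! := Nat.factorial_le hpq
      _ = (∏ i, (k i).toNat !) * Nat.multinomial univ (fun i => (k i).toNat) :=
          (Nat.multinomial_spec _ _).symm
      _ ≤ Fintype.card ι ^ p * ∏ i, (k i).toNat ! := by
          rw [mul_comm]; exact Nat.mul_le_mul_right _ (Nat.multinomial_univ_le_card_pow _)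
  have hpos : (0 : ℝ) < ∏ i, ((k i).toNat ! : ℝ) := prod_pos fun i _ => by positivity
  simp only [factorialRatio]
  rw [prod_div_distrib, mul_div_assoc', div_le_iff₀ hpos]
  exact_mod_cast hnat

lemma summable_fin_pi_prod {β : Type*} {r : ℕ} {f : Fin r → β → ℝ} (hf : ∀ a, Summable (f a))
    (hf0 : ∀ a b, 0 ≤ f a b) : Summable fun d : Fin r → β => ∏ a, f a (d a) := by
  induction r with
  | zero => exact Summable.of_finite
  | succ r ih =>
    have hprod := (hf 0).mul_of_nonneg (ih (fun a => hf a.succ) (fun a => hf0 a.succ))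
      (hf0 0) (fun d => prod_nonneg fun a _ => hf0 a.succ (d a))
    refine ((Fin.consEquiv fun _ => β).symm.summable_iff.2 hprod).congr fun d => ?_
    simp [Fin.consEquiv, Fin.prod_univ_succ, Fin.tail]

lemma summable_of_le_pow_div_factorial_sum {r : ℕ} {f : (Fin r → ℕ) → ℝ} {A R : ℝ} (hR : 0 ≤ R)
    (hf0 : ∀ d, 0 ≤ f d) (hf : ∀ d, f d ≤ A * R ^ (∑ a, d a) / (∑ a, d a)!) : Summable f := by
  have hA : 0 ≤ A := by simpa using (hf0 0).trans (hf 0)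
  refine Summable.of_nonneg_of_le hf0 (fun d => (hf d).trans ?_)
    ((summable_fin_pi_prod (fun _ => Real.summable_pow_div_factorial R)
      (fun _ m => by positivity)).mul_left A)
  rw [← prod_pow_eq_pow_sum, mul_div_assoc, prod_div_distrib]
  gcongr
  exact_mod_cast Nat.le_of_dvd (Nat.factorial_pos _) (Nat.prod_factorial_dvd_factorial_sum _ _)

lemma exists_invGammaShiftBound_uniform {ι : Type*} [Fintype ι] (α : ι → ℂ) :
    ∃ A B : ℝ, 0 ≤ A ∧ 1 ≤ B ∧
      ∀ i (k : ℤ), ‖(Gamma (α i + k))⁻¹‖ ≤ A * B ^ k.natAbs * factorialRatio k := by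
  choose A B hA hB hbound using fun i => invGammaShiftBound (α i)
  have hB_nonneg : ∀ i, 0 ≤ B i := fun i => zero_le_one.trans (hB i)
  refine ⟨∑ i, A i, 1 + ∑ i, B i, sum_nonneg fun i _ => hA i,
    le_add_of_nonneg_right (sum_nonneg fun i _ => hB_nonneg i), fun i k => (hbound i k).trans ?_⟩
  have hAi : A i ≤ ∑ j, A j := single_le_sum (fun j _ => hA j) (mem_univ i)
  have hBi : B i ≤ 1 + ∑ j, B j :=
    (single_le_sum (fun j _ => hB_nonneg j) (mem_univ i)).trans (le_add_of_nonneg_left zero_le_one)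
  have := factorialRatio_nonneg k
  have := hB_nonneg i
  gcongr
  exact (hA i).trans hAi

lemma norm_zpow_le_one_add_norm_pow {𝕜 : Type*} [NormedDivisionRing 𝕜] (z : 𝕜) {T : ℤ} {S : ℕ}
    (hT : 0 ≤ T) (hTS : T.natAbs ≤ S) : ‖z ^ T‖ ≤ (1 + ‖z‖) ^ S := by
  lift T to ℕ using hT
  rw [Int.natAbs_natCast] at hTS
  rw [zpow_natCast, norm_pow]
  calc ‖z‖ ^ T ≤ (1 + ‖z‖) ^ T := by gcongr; linarith
    _ ≤ (1 + ‖z‖) ^ S := pow_le_pow_right₀ (by linarith [norm_nonneg z]) hTS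

lemma exists_norm_zpow_mul_prod_inv_Gamma_le {ι : Type*} [Fintype ι] (α : ι → ℂ) (z : ℂ) :
    ∃ A C : ℝ, 0 ≤ A ∧ 1 ≤ C ∧ ∀ (k : ι → ℤ) (n : ℕ), (n : ℤ) ≤ ∑ i, k i →
      n ! * (‖z ^ (∑ i, k i)‖ * ∏ i, ‖(Gamma (α i + k i))⁻¹‖) ≤ A * C ^ ∑ i, (k i).natAbs := by
  obtain ⟨A, B, hA, hB, hbound⟩ := exists_invGammaShiftBound_uniform α
  set c : ℝ := ↑(Fintype.card ι)
  have hc : 0 ≤ c := Nat.cast_nonneg _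
  refine ⟨A ^ Fintype.card ι, (1 + ‖z‖) * B * (c + 1), by positivity,
    one_le_mul_of_one_le_of_one_le (one_le_mul_of_one_le_of_one_le
      (by linarith [norm_nonneg z]) hB) (by linarith), fun k n hn => ?_⟩
  set S := ∑ i, (k i).natAbs
  have hGamma :
      ∏ i, ‖(Gamma (α i + k i))⁻¹‖ ≤ A ^ Fintype.card ι * B ^ S * ∏ i, factorialRatio (k i) :=
    (prod_le_prod (fun _ _ => norm_nonneg _) fun i _ => hbound i (k i)).trans_eq
      (by rw [prod_mul_distrib, prod_mul_distrib, prod_const, prod_pow_eq_pow_sum, card_univ])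
  have hratio : n ! * ∏ i, factorialRatio (k i) ≤ (c + 1) ^ S :=
    calc n ! * ∏ i, factorialRatio (k i) ≤ c ^ ∑ i, (k i).toNat :=
          factorial_mul_prod_factorialRatio_le k hn
      _ ≤ (c + 1) ^ ∑ i, (k i).toNat := by gcongr; linarith
      _ ≤ (c + 1) ^ S := pow_le_pow_right₀ (by linarith) (sum_le_sum fun i _ => by omega)
  have hz : ‖z ^ (∑ i, k i)‖ ≤ (1 + ‖z‖) ^ S :=
    norm_zpow_le_one_add_norm_pow z (by omega) (Int.natAbs_sum_le _ _)
  calc n ! * (‖z ^ (∑ i, k i)‖ * ∏ i, ‖(Gamma (α i + k i))⁻¹‖)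
      ≤ n ! * ((1 + ‖z‖) ^ S * (A ^ Fintype.card ι * B ^ S * ∏ i, factorialRatio (k i))) := by
        gcongr
    _ = A ^ Fintype.card ι * ((1 + ‖z‖) ^ S * B ^ S) * (n ! * ∏ i, factorialRatio (k i)) := by
        ring
    _ ≤ A ^ Fintype.card ι * ((1 + ‖z‖) ^ S * B ^ S) * (c + 1) ^ S := by gcongr
    _ = A ^ Fintype.card ι * ((1 + ‖z‖) * B * (c + 1)) ^ S := by
        rw [mul_pow, mul_pow, mul_assoc]

lemma sum_natAbs_sum_mul_le {κ ι : Type*} [Fintype κ] [Fintype ι] (M : κ → ι → ℤ) (d : κ → ℕ) :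
    ∑ i, (∑ a, M a i * d a).natAbs ≤ (∑ a, ∑ i, (M a i).natAbs) * ∑ a, d a :=
  calc ∑ i, (∑ a, M a i * d a).natAbs ≤ ∑ i, ∑ a, (M a i).natAbs * ∑ a, d a := by
        refine sum_le_sum fun i _ => (Int.natAbs_sum_le _ _).trans (sum_le_sum fun a _ => ?_)
        rw [Int.natAbs_mul, Int.natAbs_natCast]
        exact Nat.mul_le_mul_left _ (single_le_sum (fun _ _ => Nat.zero_le _) (mem_univ a))
    _ = (∑ a, ∑ i, (M a i).natAbs) * ∑ a, d a := by simp only [← sum_mul]; rw [sum_comm]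

/-- Absolute convergence of the generalized Mittag–Leffler series associated with an
integer matrix `M = (m_i^a)` satisfying the positivity conditions `∑_i m_i^a > 0`. -/
theorem genML_summable (r N : ℕ) (M : Fin r → Fin N → ℤ)
    (hpos : ∀ a : Fin r, 0 < ∑ i : Fin N, M a i) (s : Fin r → ℂ) (z : ℂ) :
    Summable (fun d : Fin r → ℕ =>
      ‖z ^ (∑ a : Fin r, (∑ i : Fin N, M a i) * (d a : ℤ)) /
        ∏ i : Fin N, Complex.Gamma (1 + ∑ a : Fin r, (M a i : ℂ) * ((d a : ℂ) + s a))‖) := by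
  obtain ⟨A, C, hA, hC, hbound⟩ :=
    exists_norm_zpow_mul_prod_inv_Gamma_le (fun i => 1 + ∑ a, (M a i : ℂ) * s a) z
  refine summable_of_le_pow_div_factorial_sum (A := A) (R := C ^ ∑ a, ∑ i, (M a i).natAbs)
    (by positivity) (fun _ => norm_nonneg _) fun d => ?_
  set k : Fin N → ℤ := fun i => ∑ a, M a i * d a
  have hk_sum : ∑ a, (∑ i, M a i) * (d a : ℤ) = ∑ i, k i := by
    simp only [k, sum_mul]
    exact sum_comm
  have hterm : ‖z ^ (∑ a : Fin r, (∑ i : Fin N, M a i) * (d a : ℤ)) /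
        ∏ i : Fin N, Complex.Gamma (1 + ∑ a : Fin r, (M a i : ℂ) * ((d a : ℂ) + s a))‖ =
      ‖z ^ (∑ i, k i)‖ * ∏ i, ‖(Gamma ((1 + ∑ a, (M a i : ℂ) * s a) + k i))⁻¹‖ := by
    rw [norm_div, norm_prod, div_eq_mul_inv, ← prod_inv_distrib, hk_sum]
    congr 1
    refine prod_congr rfl fun i _ => ?_
    simp only [k, mul_add, sum_add_distrib, norm_inv]
    push_cast
    ring_nf
  have hn : ((∑ a, d a : ℕ) : ℤ) ≤ ∑ i, k i := by
    rw [← hk_sum, Nat.cast_sum]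
    exact sum_le_sum fun a _ => le_mul_of_one_le_left (by positivity) (hpos a)
  rw [hterm, le_div_iff₀ (by positivity), mul_comm, ← pow_mul]
  exact (hbound k _ hn).trans (by gcongr; exact sum_natAbs_sum_mul_le M d)
end

section
/- Let n ≥ 2 and E(s,z) = Σ_{k=0}^∞ z^{kn+ns}/Γ(1+k+s)^n. For each j with 0 ≤ j ≤ n−1, the function Φ_j(z) := (∂^j/∂s^j)|_{s=0} E(s,z) satisfies the scalar differential equation (z d/dz)^n Φ_j(z) = (nz)^n Φ_j(z). -/
/-!
In the coordinate `w = log z`, the `k`-th summand is `a_k(s) exp((kn + ns) w)` with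
`a_k(s) = Γ(1+k+s)^{-n}`, and `d/dw` acts on it as multiplication by `kn + ns`. This commutes
with `∂_s^j|_{s=0}`, as Leibniz's rule in `s` shows. Since `(n(k+s))^n a_k(s) = n^n a_{k-1}(s)`,
`(d/dw)^n` shifts the series by one index at the cost of the factor `n^n exp(n w)`; the `k = 0`
term becomes `(ns)^n a_0(s) exp(nsw)`, which vanishes to order `n` at `s = 0` and so contributes
nothing for `j < n`. Both termwise differentiations are justified by Cauchy estimates and the
bound `|1/Γ(1+k+s)| ≤ M/(k-p)!` for `|s| ≤ p`.
-/

open Complex Metric Finset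
open scoped Nat

section TermwiseDifferentiation

variable {ι E : Type*} [NormedAddCommGroup E] [NormedSpace ℂ E]

def HasSummableBoundOnBalls (F : ι → ℂ → E) : Prop :=
  ∀ R : ℝ, ∃ u : ι → ℝ, Summable u ∧ ∀ i z, ‖z‖ ≤ R → ‖F i z‖ ≤ u i

variable {F : ι → ℂ → E}

theorem HasSummableBoundOnBalls.deriv (hF : ∀ i, Differentiable ℂ (F i))
    (h : HasSummableBoundOnBalls F) : HasSummableBoundOnBalls fun i => _root_.deriv (F i) := by
  intro R
  obtain ⟨u, hu, hle⟩ := h (R + 1)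
  refine ⟨u, hu, fun i z hz => ?_⟩
  simpa using norm_deriv_le_of_forall_mem_sphere_norm_le one_pos (hF i).diffContOnCl
    fun x hx => hle i x <| (norm_le_of_mem_closedBall (sphere_subset_closedBall hx)).trans
      (by linarith : ‖z‖ + 1 ≤ R + 1)

theorem HasSummableBoundOnBalls.hasSum_iteratedDeriv [CompleteSpace E]
    (hF : ∀ i, Differentiable ℂ (F i)) (h : HasSummableBoundOnBalls F) (m : ℕ) (z : ℂ) :
    HasSum (fun i => iteratedDeriv m (F i) z) (iteratedDeriv m (fun x => ∑' i, F i x) z) := by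
  induction m generalizing F with
  | zero =>
    obtain ⟨u, hu, hle⟩ := h ‖z‖
    simpa using (hu.of_norm_bounded fun i => hle i z le_rfl).hasSum
  | succ m ih =>
    have hderiv : _root_.deriv (fun x => ∑' i, F i x) = fun x => ∑' i, _root_.deriv (F i) x := by
      funext x
      obtain ⟨u, hu, hle⟩ := h (‖x‖ + 1)
      exact (hasSum_deriv_of_summable_norm hu (fun i => (hF i).differentiableOn) isOpen_ball
        (fun i y hy => hle i y (norm_le_of_mem_closedBall (ball_subset_closedBall hy)))
        (mem_ball_self one_pos)).tsum_eq.symm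
    simpa only [iteratedDeriv_succ', hderiv] using ih (fun i => (hF i).deriv) (h.deriv hF)

end TermwiseDifferentiation

theorem iteratedDeriv_pow_mul_eq_zero {𝕜 : Type*} [NontriviallyNormedField 𝕜] {f : 𝕜 → 𝕜}
    {j n : ℕ} (hf : ContDiffAt 𝕜 j f 0) (hj : j < n) :
    iteratedDeriv j (fun s => s ^ n * f s) 0 = 0 := by
  rw [iteratedDeriv_fun_mul (by fun_prop) hf]
  refine Finset.sum_eq_zero fun i hi => ?_
  rw [iteratedDeriv_fun_pow_zero, if_neg (by have := mem_range.1 hi; omega)]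
  simp

section AffineExponential

variable (α β : ℂ)

theorem iteratedDeriv_cexp_affine (m : ℕ) (w : ℂ) :
    iteratedDeriv m (fun s => exp ((α + β * s) * w)) 0 = (β * w) ^ m * exp (α * w) := by
  have hsplit : (fun s => exp ((α + β * s) * w)) = fun s => exp (α * w) * exp (β * w * s) := by
    funext s; rw [← exp_add]; ring_nf
  rw [hsplit, iteratedDeriv_const_mul_field, iteratedDeriv_cexp_const_mul]
  simp [mul_comm]

theorem iteratedDeriv_id_mul_cexp_affine (m : ℕ) (w : ℂ) :
    iteratedDeriv m (fun s => s * exp ((α + β * s) * w)) 0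
      = m * (β * w) ^ (m - 1) * exp (α * w) := by
  rw [iteratedDeriv_fun_mul (by fun_prop) (by fun_prop)]
  cases m <;> simp [iteratedDeriv_fun_id_zero, iteratedDeriv_cexp_affine, mul_assoc]

theorem hasDerivAt_iteratedDeriv_cexp_affine (m : ℕ) (w : ℂ) :
    HasDerivAt (fun w => iteratedDeriv m (fun s => exp ((α + β * s) * w)) 0)
      (iteratedDeriv m (fun s => (α + β * s) * exp ((α + β * s) * w)) 0) w := by
  have hsplit : (fun s => (α + β * s) * exp ((α + β * s) * w))
      = fun s => α * exp ((α + β * s) * w) + β * (s * exp ((α + β * s) * w)) := by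
    funext s; ring
  rw [hsplit, iteratedDeriv_fun_add (by fun_prop) (by fun_prop), iteratedDeriv_const_mul_field,
    iteratedDeriv_const_mul_field, iteratedDeriv_id_mul_cexp_affine, iteratedDeriv_cexp_affine,
    funext (iteratedDeriv_cexp_affine α β m)]
  refine ((((hasDerivAt_id' w).const_mul β).fun_pow m).fun_mul
    ((hasDerivAt_id' w).const_mul α).cexp).congr_deriv ?_
  ring

theorem hasDerivAt_iteratedDeriv_mul_cexp_affine {j : ℕ} {a : ℂ → ℂ} (ha : ContDiffAt ℂ j a 0)
    (w : ℂ) :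
    HasDerivAt (fun w => iteratedDeriv j (fun s => a s * exp ((α + β * s) * w)) 0)
      (iteratedDeriv j (fun s => (α + β * s) * a s * exp ((α + β * s) * w)) 0) w := by
  have hleibniz : (fun w => iteratedDeriv j (fun s => a s * exp ((α + β * s) * w)) 0)
      = fun w => ∑ i ∈ range (j + 1), j.choose i * iteratedDeriv i a 0 *
          iteratedDeriv (j - i) (fun s => exp ((α + β * s) * w)) 0 :=
    funext fun w => iteratedDeriv_fun_mul ha (by fun_prop)
  have hcomm : (fun s => (α + β * s) * a s * exp ((α + β * s) * w))
      = fun s => a s * ((α + β * s) * exp ((α + β * s) * w)) := by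
    funext s; ring
  rw [hleibniz, hcomm, iteratedDeriv_fun_mul ha (by fun_prop)]
  exact HasDerivAt.fun_sum fun i _ => (hasDerivAt_iteratedDeriv_cexp_affine α β _ w).const_mul _

theorem iteratedDeriv_iteratedDeriv_mul_cexp_affine (n : ℕ) {j : ℕ} {a : ℂ → ℂ}
    (ha : ContDiffAt ℂ j a 0) :
    iteratedDeriv n (fun w => iteratedDeriv j (fun s => a s * exp ((α + β * s) * w)) 0)
      = fun w => iteratedDeriv j (fun s => (α + β * s) ^ n * a s * exp ((α + β * s) * w)) 0 := by
  induction n generalizing a with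
  | zero => simp
  | succ n ih =>
    rw [iteratedDeriv_succ',
      funext fun w => (hasDerivAt_iteratedDeriv_mul_cexp_affine α β ha w).deriv,
      ih (by fun_prop)]
    funext w
    congr 1
    funext s
    ring

end AffineExponential

theorem norm_inv_Gamma_nat_add_le (p l : ℕ) {s : ℂ} (hs : ‖s‖ ≤ p) :
    ‖(Gamma (1 + ↑(p + l) + s))⁻¹‖ ≤ ‖(Gamma (1 + p + s))⁻¹‖ / l ! := by
  induction l with
  | zero => simp
  | succ l ih =>
    set z : ℂ := 1 + ↑(p + l) + s
    have hz : (l + 1 : ℝ) ≤ ‖z‖ := by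
      have := norm_sub_norm_le ((1 + p + l : ℕ) : ℂ) (-s)
      rw [norm_neg, Complex.norm_natCast] at this
      have hz' : ((1 + p + l : ℕ) : ℂ) - -s = z := by simp [z]; ring
      rw [hz'] at this
      push_cast at this
      linarith
    have hrec : ‖(Gamma (z + 1))⁻¹‖ * ‖z‖ = ‖(Gamma z)⁻¹‖ := by
      rw [one_div_Gamma_eq_self_mul_one_div_Gamma_add_one z, norm_mul, mul_comm]
    have harg : 1 + ↑(p + (l + 1)) + s = z + 1 := by push_cast [z]; ring
    rw [harg, Nat.factorial_succ, Nat.cast_mul, mul_comm, ← div_div,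
      le_div_iff₀ (by positivity : (0 : ℝ) < (l + 1 : ℕ))]
    push_cast
    calc ‖(Gamma (z + 1))⁻¹‖ * (l + 1) ≤ ‖(Gamma (z + 1))⁻¹‖ * ‖z‖ := by gcongr
      _ ≤ _ := hrec ▸ ih

theorem exists_norm_inv_Gamma_le_div_factorial (p : ℕ) : ∃ M, 0 ≤ M ∧
    ∀ (k : ℕ) (s : ℂ), ‖s‖ ≤ p → ‖(Gamma (1 + k + s))⁻¹‖ ≤ M / (k - p)! := by
  obtain ⟨M, hM⟩ := (isCompact_closedBall (0 : ℂ) (1 + 2 * p)).exists_bound_of_continuousOn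
    differentiable_one_div_Gamma.continuous.continuousOn
  have hball : ∀ k ≤ p, ∀ s : ℂ, ‖s‖ ≤ p → 1 + k + s ∈ closedBall (0 : ℂ) (1 + 2 * p) := by
    intro k hk s hs
    rw [mem_closedBall_zero_iff]
    have : (k : ℝ) ≤ p := by exact_mod_cast hk
    calc ‖1 + k + s‖ ≤ ‖(1 + k : ℂ)‖ + ‖s‖ := norm_add_le _ _
      _ ≤ 1 + 2 * p := by
        rw [show (1 + k : ℂ) = ((1 + k : ℕ) : ℂ) by push_cast; ring, Complex.norm_natCast]
        push_cast; linarith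
  refine ⟨M, (norm_nonneg _).trans (hM 0 (by simp; positivity)), fun k s hs => ?_⟩
  rcases le_or_gt k p with hk | hk
  · simpa [Nat.sub_eq_zero_of_le hk] using hM _ (hball k hk s hs)
  · obtain ⟨l, rfl⟩ := Nat.exists_eq_add_of_le hk.le
    rw [Nat.add_sub_cancel_left]
    exact (norm_inv_Gamma_nat_add_le p l hs).trans
      (div_le_div_of_nonneg_right (hM _ (hball p le_rfl s hs)) (by positivity))

theorem summable_pow_div_factorial_sub (r : ℝ) (p : ℕ) :
    Summable fun k : ℕ => r ^ k / (k - p)! := by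
  rw [← summable_nat_add_iff p]
  simpa [pow_add, mul_div_assoc, mul_comm] using (Real.summable_pow_div_factorial r).mul_left (r ^ p)

noncomputable def genMLTerm (n k : ℕ) (s w : ℂ) : ℂ :=
  exp (((k : ℂ) * n + (n : ℂ) * s) * w) / (Gamma (1 + (k : ℂ) + s)) ^ n

theorem genMLTerm_eq (n k : ℕ) (s w : ℂ) :
    genMLTerm n k s w = (Gamma (1 + k + s))⁻¹ ^ n * exp ((k * n + n * s) * w) := by
  rw [genMLTerm, div_eq_mul_inv, inv_pow, mul_comm]

theorem differentiable_inv_Gamma_pow (n k : ℕ) :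
    Differentiable ℂ fun s : ℂ => (Gamma (1 + k + s))⁻¹ ^ n :=
  (differentiable_one_div_Gamma.comp (by fun_prop)).pow n

theorem differentiable_genMLTerm (n k : ℕ) (w : ℂ) :
    Differentiable ℂ fun s => genMLTerm n k s w := by
  simp only [genMLTerm_eq]
  exact (differentiable_inv_Gamma_pow n k).mul (by fun_prop)

theorem exists_norm_genMLTerm_le {n : ℕ} (hn : n ≠ 0) (R : ℝ) : ∃ u : ℕ → ℝ, Summable u ∧
    ∀ k s w, ‖s‖ ≤ R → ‖w‖ ≤ R → ‖genMLTerm n k s w‖ ≤ u k := by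
  set p := ⌈R⌉₊
  obtain ⟨M, hM0, hM⟩ := exists_norm_inv_Gamma_le_div_factorial p
  refine ⟨fun k => M ^ n * Real.exp (n * R * R) * (Real.exp (n * R) ^ k / (k - p)!),
    (summable_pow_div_factorial_sub _ p).mul_left _, fun k s w hs hw => ?_⟩
  have hR : 0 ≤ R := (norm_nonneg s).trans hs
  have hGamma : ‖(Gamma (1 + k + s))⁻¹ ^ n‖ ≤ M ^ n / (k - p)! :=
    calc ‖(Gamma (1 + k + s))⁻¹ ^ n‖ ≤ (M / (k - p)!) ^ n := by
          rw [norm_pow]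
          exact pow_le_pow_left₀ (norm_nonneg _) (hM k s (hs.trans (Nat.le_ceil R))) n
      _ = M ^ n * ((k - p)! : ℝ)⁻¹ ^ n := by rw [div_pow, div_eq_mul_inv, inv_pow]
      _ ≤ M ^ n * ((k - p)! : ℝ)⁻¹ := by
          gcongr
          exact pow_le_of_le_one (by positivity)
            (inv_le_one_of_one_le₀ (by exact_mod_cast Nat.factorial_pos _)) hn
      _ = M ^ n / (k - p)! := div_eq_mul_inv _ _ |>.symm
  have hexp : ‖exp ((k * n + n * s) * w)‖ ≤ Real.exp (n * R * R) * Real.exp (n * R) ^ k :=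
    calc ‖exp ((k * n + n * s) * w)‖ ≤ Real.exp ‖((k : ℂ) * n + n * s) * w‖ := by
          rw [norm_exp]; exact Real.exp_le_exp.mpr (re_le_norm _)
      _ ≤ Real.exp ((k * n + n * R) * R) := by
          gcongr
          calc ‖((k : ℂ) * n + n * s) * w‖ ≤ (‖(k : ℂ) * n‖ + ‖(n : ℂ) * s‖) * ‖w‖ := by
                rw [norm_mul]; gcongr; exact norm_add_le _ _
            _ ≤ (k * n + n * R) * R := by
                simp only [norm_mul, Complex.norm_natCast]; gcongr
      _ = Real.exp (n * R * R) * Real.exp (n * R) ^ k := by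
          rw [← Real.exp_nat_mul, ← Real.exp_add]; ring_nf
  rw [genMLTerm_eq, norm_mul]
  calc _ ≤ M ^ n / (k - p)! * (Real.exp (n * R * R) * Real.exp (n * R) ^ k) :=
        mul_le_mul hGamma hexp (norm_nonneg _) (by positivity)
    _ = _ := by ring

theorem hasSummableBoundOnBalls_genMLTerm {n : ℕ} (hn : n ≠ 0) (w : ℂ) :
    HasSummableBoundOnBalls fun k s => genMLTerm n k s w := by
  intro R
  obtain ⟨u, hu, hle⟩ := exists_norm_genMLTerm_le hn (max R ‖w‖)
  exact ⟨u, hu, fun k s hs => hle k s w (hs.trans (le_max_left _ _)) (le_max_right _ _)⟩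

theorem hasSummableBoundOnBalls_iteratedDeriv_genMLTerm {n : ℕ} (hn : n ≠ 0) (j : ℕ) :
    HasSummableBoundOnBalls fun k w => iteratedDeriv j (fun s => genMLTerm n k s w) 0 := by
  intro R
  obtain ⟨u, hu, hle⟩ := exists_norm_genMLTerm_le hn (max R 1)
  refine ⟨fun k => j ! * u k, hu.mul_left _, fun k w hw => ?_⟩
  simpa using norm_iteratedDeriv_le_of_forall_mem_sphere_norm_le j one_pos
    (differentiable_genMLTerm n k w).diffContOnCl fun s hs =>
      hle k s w (by simp_all) (hw.trans (le_max_left _ _))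

theorem differentiable_iteratedDeriv_genMLTerm (n j k : ℕ) :
    Differentiable ℂ fun w => iteratedDeriv j (fun s => genMLTerm n k s w) 0 := by
  simp only [genMLTerm_eq]
  exact fun w => (hasDerivAt_iteratedDeriv_mul_cexp_affine _ _
    (differentiable_inv_Gamma_pow n k).contDiff.contDiffAt w).differentiableAt

theorem iteratedDeriv_iteratedDeriv_genMLTerm (n j k : ℕ) (w : ℂ) :
    iteratedDeriv n (fun w => iteratedDeriv j (fun s => genMLTerm n k s w) 0) w
      = iteratedDeriv j (fun s => (k * n + n * s) ^ n * (Gamma (1 + k + s))⁻¹ ^ n *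
          exp ((k * n + n * s) * w)) 0 := by
  simp only [genMLTerm_eq]
  rw [iteratedDeriv_iteratedDeriv_mul_cexp_affine _ _ n
    (differentiable_inv_Gamma_pow n k).contDiff.contDiffAt]

theorem iteratedDeriv_iteratedDeriv_genMLTerm_zero {n j : ℕ} (hj : j < n) (w : ℂ) :
    iteratedDeriv n (fun w => iteratedDeriv j (fun s => genMLTerm n 0 s w) 0) w = 0 := by
  rw [iteratedDeriv_iteratedDeriv_genMLTerm]
  have hfactor : (fun s : ℂ => ((0 : ℕ) * n + n * s) ^ n * (Gamma (1 + (0 : ℕ) + s))⁻¹ ^ n *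
      exp (((0 : ℕ) * n + n * s) * w))
      = fun s => s ^ n * (n ^ n * (Gamma (1 + s))⁻¹ ^ n * exp (n * s * w)) := by
    funext s; simp only [Nat.cast_zero, zero_mul, zero_add, add_zero, mul_pow]; ring
  rw [hfactor]
  have hdiff : Differentiable ℂ fun s => (n : ℂ) ^ n * (Gamma (1 + s))⁻¹ ^ n * exp (n * s * w) :=
    ((differentiable_one_div_Gamma.comp (by fun_prop)).pow n |>.const_mul _).mul (by fun_prop)
  exact iteratedDeriv_pow_mul_eq_zero hdiff.contDiff.contDiffAt hj

theorem iteratedDeriv_iteratedDeriv_genMLTerm_succ (n j k : ℕ) (w : ℂ) :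
    iteratedDeriv n (fun w => iteratedDeriv j (fun s => genMLTerm n (k + 1) s w) 0) w
      = n ^ n * exp (n * w) * iteratedDeriv j (fun s => genMLTerm n k s w) 0 := by
  rw [iteratedDeriv_iteratedDeriv_genMLTerm, ← iteratedDeriv_const_mul_field]
  congr 1
  funext s
  have hrec := one_div_Gamma_eq_self_mul_one_div_Gamma_add_one (1 + k + s)
  rw [genMLTerm_eq, show ((k + 1 : ℕ) : ℂ) * n + n * s = n * (1 + k + s) by push_cast; ring,
    show 1 + ((k + 1 : ℕ) : ℂ) + s = 1 + k + s + 1 by push_cast; ring,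
    show (n : ℂ) * (1 + k + s) * w = n * w + (k * n + n * s) * w by ring, exp_add, hrec, mul_pow,
    mul_pow]
  ring

/-- Stated in the coordinate `w = log z` on the universal cover of `ℂ*`, where `θ_z = z d/dz`
becomes `d/dw` and `(nz)^n = n^n exp(n w)`. -/
theorem derivatives_genML_solve_qde (n : ℕ) (hn : 2 ≤ n) (j : ℕ) (hj : j ≤ n - 1) (w : ℂ) :
    iteratedDeriv n
        (fun w' : ℂ => iteratedDeriv j
          (fun s : ℂ => ∑' k : ℕ,
            Complex.exp (((k : ℂ) * n + (n : ℂ) * s) * w') / (Complex.Gamma (1 + (k : ℂ) + s)) ^ n) 0) w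
      = (n : ℂ) ^ n * Complex.exp ((n : ℂ) * w) *
          iteratedDeriv j
            (fun s : ℂ => ∑' k : ℕ,
              Complex.exp (((k : ℂ) * n + (n : ℂ) * s) * w) / (Complex.Gamma (1 + (k : ℂ) + s)) ^ n) 0 := by
  change iteratedDeriv n (fun w' => iteratedDeriv j (fun s => ∑' k, genMLTerm n k s w') 0) w
    = n ^ n * exp (n * w) * iteratedDeriv j (fun s => ∑' k, genMLTerm n k s w) 0
  have hn0 : n ≠ 0 := by omega
  have hΦ (w' : ℂ) : HasSum (fun k => iteratedDeriv j (fun s => genMLTerm n k s w') 0)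
      (iteratedDeriv j (fun s => ∑' k, genMLTerm n k s w') 0) :=
    (hasSummableBoundOnBalls_genMLTerm hn0 w').hasSum_iteratedDeriv
      (fun k => differentiable_genMLTerm n k w') j 0
  have hθΦ := (hasSummableBoundOnBalls_iteratedDeriv_genMLTerm hn0 j).hasSum_iteratedDeriv
    (differentiable_iteratedDeriv_genMLTerm n j) n w
  rw [← funext fun w' => (hΦ w').tsum_eq]
  rw [← hasSum_nat_add_iff' 1] at hθΦ
  simp only [iteratedDeriv_iteratedDeriv_genMLTerm_succ, sum_range_one,
    iteratedDeriv_iteratedDeriv_genMLTerm_zero (by omega : j < n), sub_zero] at hθΦ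
  exact hθΦ.unique ((hΦ w).mul_left _)
end
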